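/- Let k ≥ 2 and let x_1, …, x_k be real numbers satisfying: x_1 > 0; x_i ≥ 0 for all i ∈ {1, …, k}; and x_i ≤ 2·max_{j ∈ {1, …, i−1}} x_j for all i ∈ {2, …, k}. Then for every m ∈ {1, …, k−1}, (1/m)·∑_{i=1}^{m} 2^{-i}·x_i ≥ (1/(m+1))·∑_{i=1}^{m+1} 2^{-i}·x_i. -/

import Mathlib

/-!
Write `S n = ∑_{i ≤ n} 2^{-i} x_i`. By induction, `n 2^{-n} x_j ≤ S n` for every `j ≤ n`:
for old indices because `n 2^{-n}` is nonincreasing for `n ≥ 1`, and for the new index `n + 1`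
because `x_{n+1} ≤ 2 x_j` for some `j ≤ n`, which gives `n 2^{-(n+1)} x_{n+1} ≤ n 2^{-n} x_j ≤ S n`.
That last bound, `n 2^{-(n+1)} x_{n+1} ≤ S n`, is exactly `S (n + 1) / (n + 1) ≤ S n / n`.
-/

open Finset

noncomputable def dyadicSum (x : ℕ → ℝ) (n : ℕ) : ℝ :=
  ∑ i ∈ Icc 1 n, (2 : ℝ) ^ (-(i : ℤ)) * x i

lemma two_zpow_neg_succ (n : ℕ) :
    (2 : ℝ) ^ (-((n + 1 : ℕ) : ℤ)) = (2 : ℝ) ^ (-(n : ℤ)) / 2 := by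
  rw [Nat.cast_succ, neg_add, zpow_add₀ two_ne_zero, zpow_neg_one, div_eq_mul_inv]

lemma dyadicSum_succ (x : ℕ → ℝ) (n : ℕ) :
    dyadicSum x (n + 1) = dyadicSum x n + (2 : ℝ) ^ (-((n + 1 : ℕ) : ℤ)) * x (n + 1) :=
  sum_Icc_succ_top (Nat.le_add_left 1 n) _

lemma succ_mul_two_zpow_neg_succ_le {n : ℕ} (hn : 1 ≤ n) :
    ((n + 1 : ℕ) : ℝ) * (2 : ℝ) ^ (-((n + 1 : ℕ) : ℤ)) ≤ n * (2 : ℝ) ^ (-(n : ℤ)) := by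
  have hn' : (1 : ℝ) ≤ n := by exact_mod_cast hn
  rw [two_zpow_neg_succ, Nat.cast_succ]
  nlinarith [zpow_pos (two_pos : (0 : ℝ) < 2) (-(n : ℤ))]

lemma div_succ_le_div_of_mul_le {m : ℕ} (hm : 0 < m) {S a : ℝ} (h : m * a ≤ S) :
    (S + a) / (m + 1) ≤ S / m := by
  have hm' : (0 : ℝ) < m := by exact_mod_cast hm
  rw [div_le_div_iff₀ (by positivity) hm']
  nlinarith

section Invariant

variable {x : ℕ → ℝ} {k : ℕ}

lemma mul_two_zpow_neg_succ_mul_le_dyadicSum {n j : ℕ} (hxj : x (n + 1) ≤ 2 * x j)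
    (hS : n * (2 : ℝ) ^ (-(n : ℤ)) * x j ≤ dyadicSum x n) :
    n * ((2 : ℝ) ^ (-((n + 1 : ℕ) : ℤ)) * x (n + 1)) ≤ dyadicSum x n := by
  have hn : (0 : ℝ) ≤ n := n.cast_nonneg
  rw [two_zpow_neg_succ]
  nlinarith [zpow_pos (two_pos : (0 : ℝ) < 2) (-(n : ℤ)),
    mul_nonneg hn (zpow_pos (two_pos : (0 : ℝ) < 2) (-(n : ℤ))).le]

lemma mul_two_zpow_neg_mul_le_dyadicSum (hx0 : ∀ i ∈ Icc 1 k, 0 ≤ x i)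
    (hdbl : ∀ i ∈ Icc 2 k, ∃ j ∈ Ico 1 i, x i ≤ 2 * x j) :
    ∀ n ≤ k, ∀ j ∈ Icc 1 n, n * (2 : ℝ) ^ (-(n : ℤ)) * x j ≤ dyadicSum x n := by
  intro n
  induction n with
  | zero => simp
  | succ n ih =>
    intro hnk j hj
    obtain ⟨hj1, hjn⟩ := mem_Icc.mp hj
    have hlast : 0 ≤ (2 : ℝ) ^ (-((n + 1 : ℕ) : ℤ)) * x (n + 1) :=
      mul_nonneg (zpow_pos two_pos _).le (hx0 _ (mem_Icc.mpr ⟨by omega, hnk⟩))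
    rw [dyadicSum_succ]
    rcases hjn.lt_or_eq with hjn | rfl
    · have hxj : 0 ≤ x j := hx0 j (mem_Icc.mpr ⟨hj1, by omega⟩)
      calc ((n + 1 : ℕ) : ℝ) * (2 : ℝ) ^ (-((n + 1 : ℕ) : ℤ)) * x j
          ≤ n * (2 : ℝ) ^ (-(n : ℤ)) * x j :=
            mul_le_mul_of_nonneg_right (succ_mul_two_zpow_neg_succ_le (by omega)) hxj
        _ ≤ dyadicSum x n := ih (by omega) j (mem_Icc.mpr ⟨hj1, by omega⟩)
        _ ≤ _ := le_add_of_nonneg_right hlast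
    · rcases Nat.eq_zero_or_pos n with rfl | hn
      · simp [dyadicSum]
      obtain ⟨i, hi, hxi⟩ := hdbl (n + 1) (mem_Icc.mpr ⟨by omega, hnk⟩)
      obtain ⟨hi1, hin⟩ := mem_Ico.mp hi
      have hnew := mul_two_zpow_neg_succ_mul_le_dyadicSum hxi
        (ih (by omega) i (mem_Icc.mpr ⟨hi1, by omega⟩))
      push_cast at hnew ⊢
      linarith

end Invariant

/-- For `k ≥ 2` and reals `x_1, …, x_k` with `x_1 > 0`, `x_i ≥ 0` for all
`i ∈ {1, …, k}`, and `x_i ≤ 2·max_{j ∈ {1, …, i−1}} x_j` for `i ∈ {2, …, k}`,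
for every `m ∈ {1, …, k−1}`:
`(1/m)·∑_{i=1}^{m} 2^{-i}·x_i ≥ (1/(m+1))·∑_{i=1}^{m+1} 2^{-i}·x_i`. -/
theorem stmt_9 (k : ℕ) (x : ℕ → ℝ)
    (hx0 : ∀ i ∈ Finset.Icc 1 k, 0 ≤ x i)
    (hx2 : ∀ i, ∀ h2 : 2 ≤ i, i ≤ k →
      x i ≤ 2 * (Finset.Icc 1 (i - 1)).sup' (Finset.nonempty_Icc.mpr (by omega)) x)
    (m : ℕ) (hm : m ∈ Finset.Icc 1 (k - 1)) :
    (1 / (m : ℝ)) * ∑ i ∈ Finset.Icc 1 m, (2 : ℝ) ^ (-(i : ℤ)) * x i ≥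
      (1 / ((m : ℝ) + 1)) * ∑ i ∈ Finset.Icc 1 (m + 1), (2 : ℝ) ^ (-(i : ℤ)) * x i := by
  obtain ⟨hm1, hmk⟩ := mem_Icc.mp hm
  have hdbl : ∀ i ∈ Icc 2 k, ∃ j ∈ Ico 1 i, x i ≤ 2 * x j := by
    intro i hi
    obtain ⟨hi2, hik⟩ := mem_Icc.mp hi
    obtain ⟨j, hj, hjmax⟩ :=
      exists_mem_eq_sup' (nonempty_Icc.mpr (by omega : 1 ≤ i - 1)) x
    obtain ⟨hj1, hji⟩ := mem_Icc.mp hj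
    exact ⟨j, mem_Ico.mpr ⟨hj1, by omega⟩, hjmax ▸ hx2 i hi2 hik⟩
  obtain ⟨j, hj, hxj⟩ := hdbl (m + 1) (mem_Icc.mpr ⟨by omega, by omega⟩)
  have hj : j ∈ Icc 1 m := Ico_add_one_right_eq_Icc 1 m ▸ hj
  have hstep := mul_two_zpow_neg_succ_mul_le_dyadicSum hxj
    (mul_two_zpow_neg_mul_le_dyadicSum hx0 hdbl m (by omega) j hj)
  have hmean := div_succ_le_div_of_mul_le hm1 hstep
  rw [← dyadicSum_succ] at hmean
  simpa only [ge_iff_le, one_div_mul_eq_div, dyadicSum, Nat.cast_succ] using hmean
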